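/- Let C(C,A,d) be reducible (with exactly two irreducible components M and M'), where C is irreducible and not the circle centered at A of radius d. Then the restriction of π₂ to π₁⁻¹(M) is a birational map onto C; consequently, every simple component of a reducible conchoid is birationally equivalent to the base curve C. -/

import Mathlib

open MvPolynomial Set

noncomputable section

/-- Zariski closure of a subset of affine n-space over K. -/
def zarClosure (K : Type*) [Field K] (n : ℕ) (S : Set (Fin n → K)) : Set (Fin n → K) :=
  {x | ∀ p : MvPolynomial (Fin n) K, (∀ s ∈ S, eval s p = 0) → eval x p = 0}

/-- The Zariski topology on affine n-space over K. -/
instance zariskiTop (K : Type*) [Field K] (n : ℕ) : TopologicalSpace (Fin n → K) :=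
  TopologicalSpace.generateFrom
    {U | ∃ p : MvPolynomial (Fin n) K, U = {x | eval x p ≠ 0}}

/-- The affine plane curve defined by a bivariate polynomial. -/
def curveOf {K : Type*} [Field K] (f : MvPolynomial (Fin 2) K) : Set (Fin 2 → K) :=
  {y | eval y f = 0}

/-- Squared distance (w.r.t. the bilinear form x₁y₁+x₂y₂) between P and A. -/
def nSq {K : Type*} [Field K] (A P : Fin 2 → K) : K :=
  (P 0 - A 0) ^ 2 + (P 1 - A 1) ^ 2

/-- The non-isotropic locus C₀ of a set C relative to the focus A. -/
def nonIso {K : Type*} [Field K] (C : Set (Fin 2 → K)) (A : Fin 2 → K) : Set (Fin 2 → K) :=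
  {P ∈ C | nSq A P ≠ 0}

/-- The incidence variety B(C,A,d) ⊆ K² × K² × K. -/
def Inc {K : Type*} [Field K] (C : Set (Fin 2 → K)) (A : Fin 2 → K) (d : K) :
    Set ((Fin 2 → K) × (Fin 2 → K) × K) :=
  {q | q.2.1 ∈ C ∧
    (q.1 0 - q.2.1 0) ^ 2 + (q.1 1 - q.2.1 1) ^ 2 = d ^ 2 ∧
    (q.2.1 1 - A 1) * (q.1 0 - q.2.1 0) - (q.2.1 0 - A 0) * (q.1 1 - q.2.1 1) = 0 ∧
    q.2.2 * nSq A q.2.1 = 1}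

/-- The conchoid of C from focus A at distance d: the Zariski closure of π₁(B(C,A,d)). -/
def conchoid {K : Type*} [Field K] (C : Set (Fin 2 → K)) (A : Fin 2 → K) (d : K) :
    Set (Fin 2 → K) :=
  zarClosure K 2 ((fun q => q.1) '' Inc C A d)

/-- M is an irreducible component of S (w.r.t. the Zariski topology). -/
def IsCompOf {K : Type*} [Field K] {n : ℕ} (M S : Set (Fin n → K)) : Prop :=
  IsIrreducible M ∧ IsClosed M ∧ M ⊆ S ∧
    ∀ M' : Set (Fin n → K), IsIrreducible M' → M' ⊆ S → M ⊆ M' → M' = M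

/-- The circle centered at A of radius r. -/
def circleAt {K : Type*} [Field K] (A : Fin 2 → K) (r : K) : Set (Fin 2 → K) :=
  {y | nSq A y = r ^ 2}

/-- C is a line through the point A. -/
def IsLineThrough {K : Type*} [Field K] (C : Set (Fin 2 → K)) (A : Fin 2 → K) : Prop :=
  ∃ l m : K, ¬(l = 0 ∧ m = 0) ∧ C = {y | l * (y 0 - A 0) + m * (y 1 - A 1) = 0}

/-- The set of base points of C generating a point Q of the conchoid. -/
def gens {K : Type*} [Field K] (C : Set (Fin 2 → K)) (A : Fin 2 → K) (d : K)
    (Q : Fin 2 → K) : Set (Fin 2 → K) :=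
  (fun q => q.2.1) '' {q ∈ Inc C A d | q.1 = Q}

/-- A component M of the conchoid of C is simple if generically each of its points
is generated by exactly one point of C. -/
def IsSimpleComp {K : Type*} [Field K] (C : Set (Fin 2 → K)) (A : Fin 2 → K) (d : K)
    (M : Set (Fin 2 → K)) : Prop :=
  ∃ Ω : Set (Fin 2 → K), Ω.Nonempty ∧ Ω ⊆ M ∧ M ⊆ closure Ω ∧
    ∀ Q ∈ Ω, (gens C A d Q).ncard = 1

/-- A component M of the conchoid of C is special if generically each of its points
is generated by more than one point of C. -/
def IsSpecialComp {K : Type*} [Field K] (C : Set (Fin 2 → K)) (A : Fin 2 → K) (d : K)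
    (M : Set (Fin 2 → K)) : Prop :=
  ∃ Ω : Set (Fin 2 → K), Ω.Nonempty ∧ Ω ⊆ M ∧ M ⊆ closure Ω ∧
    ∀ Q ∈ Ω, 1 < (gens C A d Q).ncard

end

/-!
Choose `g` vanishing on `M` but not on `M'`. A point `P ∈ C₀` generates the two conchoid points
`P ± τ (P - A)` with `τ² nSq A P = d²`; after clearing denominators, the sum and the product of the
values of `g` at them are polynomials in `P` (`branchSum`). If `f` divided both, `g` would vanish on
all of `π₁(B)`, hence on the conchoid. So one of them is not divisible by the irreducible `f` and,
by a Bézout-type argument with the resultant, vanishes at only finitely many points of `C`. Thus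
only finitely many `P ∈ C₀` have both conchoid points in `M`, and likewise for `M'`; every other
`P` has exactly one conchoid point in `M`. A cofinite subset of the infinite irreducible curve `C`
is Zariski dense in it.
-/

section Zariski

open TopologicalSpace

variable {K : Type*} [Field K] {n : ℕ}

lemma isTopologicalBasis_basicOpen :
    IsTopologicalBasis
      {U : Set (Fin n → K) | ∃ p : MvPolynomial (Fin n) K, U = {x | eval x p ≠ 0}} :=
  isTopologicalBasis_of_subbasis_of_finiteInter rfl
    { univ_mem := ⟨1, by simp⟩
      inter_mem := by
        rintro _ ⟨p, rfl⟩ _ ⟨q, rfl⟩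
        exact ⟨p * q, by ext; simp [not_or]⟩ }

lemma closure_eq_zarClosure (S : Set (Fin n → K)) : closure S = zarClosure K n S := by
  ext x
  simp only [isTopologicalBasis_basicOpen.mem_closure_iff, zarClosure, mem_ofPred_eq,
    forall_exists_index, forall_eq_apply_imp_iff]
  refine forall_congr' fun p => ?_
  rw [not_imp_comm]
  simp only [Set.Nonempty, mem_inter_iff, mem_ofPred_eq, not_exists, not_and]
  exact imp_congr_left (forall_congr' fun y => not_imp_not)

lemma exists_eval_ne_zero_of_notMem {Z : Set (Fin n → K)} (hZ : IsClosed Z) {z : Fin n → K}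
    (hz : z ∉ Z) : ∃ p : MvPolynomial (Fin n) K, (∀ y ∈ Z, eval y p = 0) ∧ eval z p ≠ 0 := by
  rw [← hZ.closure_eq, closure_eq_zarClosure] at hz
  simpa [zarClosure] using hz

lemma IsCompOf.not_subset {M M' S : Set (Fin n → K)} (hM : IsCompOf M S) (hM' : IsCompOf M' S)
    (hne : M ≠ M') : ¬S ⊆ M' :=
  fun h => hne (hM.2.2.2 M' hM'.1 hM'.2.2.1 (hM.2.2.1.trans h)).symm

end Zariski

section Bivariate

open Polynomial Polynomial.Bivariate

variable {K : Type*} [Field K]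

lemma C_X_sub_C_dvd_of_map_evalRingHom_eq_zero {G : K[X][Y]} {x : K}
    (h : G.map (evalRingHom x) = 0) : Polynomial.C (Polynomial.X - Polynomial.C x) ∣ G := by
  rw [Polynomial.C_dvd_iff_dvd_coeff]
  intro i
  rw [dvd_iff_isRoot]
  simpa using congr(coeff $h i)

lemma map_evalRingHom_ne_zero_of_isPrimitive {F : K[X][Y]} (hF : F.IsPrimitive) (x : K) :
    F.map (evalRingHom x) ≠ 0 := fun h =>
  not_isUnit_X_sub_C x (hF _ (C_X_sub_C_dvd_of_map_evalRingHom_eq_zero h))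

lemma finite_setOf_evalEval_eq_zero_of_fst_mem {S : Set K} (hS : S.Finite) {G : K[X][Y]}
    (hG : ∀ x ∈ S, G.map (evalRingHom x) ≠ 0) :
    {z : K × K | z.1 ∈ S ∧ G.evalEval z.1 z.2 = 0}.Finite := by
  refine (hS.biUnion fun x hx => ((finite_setOfPred_isRoot (hG x hx)).image (Prod.mk x))).subset ?_
  rintro ⟨x, y⟩ ⟨hx, hxy⟩
  exact Set.mem_biUnion hx ⟨y, by simpa [IsRoot, map_evalRingHom_eval] using hxy, rfl⟩

lemma resultant_ne_zero_of_irreducible_of_not_dvd {F G : K[X][Y]} (hF : Irreducible F)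
    (hdeg : F.natDegree ≠ 0) (hFG : ¬F ∣ G) : F.resultant G ≠ 0 := by
  set φ := algebraMap K[X] (FractionRing K[X])
  have hφ : Function.Injective φ := IsFractionRing.injective _ _
  have hprim := hF.isPrimitive hdeg
  have hcop : IsCoprime (F.map φ) (G.map φ) :=
    ((hprim.irreducible_iff_irreducible_map_fraction_map).mp hF).coprime_iff_not_dvd.mpr
      fun h => hFG (hprim.dvd_of_fraction_map_dvd_fraction_map h)
  have := resultant_ne_zero _ _ hcop
  rwa [natDegree_map_eq_of_injective hφ, natDegree_map_eq_of_injective hφ, resultant_map_map,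
    map_ne_zero_iff _ hφ] at this

/-- If `F ∤ G`, the first coordinates of the common zeros are roots of `a` when `F = C a`, and
roots of the resultant `Res_Y(F, G)` otherwise; above each of them lie finitely many zeros. -/
theorem dvd_of_infinite_setOf_evalEval_eq_zero {F G : K[X][Y]} (hF : Irreducible F)
    (hFG : {z : K × K | F.evalEval z.1 z.2 = 0 ∧ G.evalEval z.1 z.2 = 0}.Infinite) : F ∣ G := by
  by_contra hndvd
  apply hFG
  by_cases hdeg : F.natDegree = 0
  · obtain ⟨a, rfl⟩ : ∃ a, F = Polynomial.C a := ⟨_, eq_C_of_natDegree_eq_zero hdeg⟩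
    have ha : Irreducible a := hF.of_map
    refine (finite_setOf_evalEval_eq_zero_of_fst_mem (finite_setOfPred_isRoot ha.ne_zero)
      fun x hx h => hndvd ?_).subset fun z hz => ⟨?_, hz.2⟩
    · have hax : a ∣ Polynomial.X - Polynomial.C x :=
        (irreducible_X_sub_C x).dvd_symm ha (dvd_iff_isRoot.mpr hx)
      exact (_root_.map_dvd Polynomial.C hax).trans (C_X_sub_C_dvd_of_map_evalRingHom_eq_zero h)
    · simpa [evalEval_C] using hz.1
  · obtain ⟨p, q, -, -, hpq⟩ := exists_mul_add_mul_eq_C_resultant F G le_rfl le_rfl (.inl hdeg)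
    refine (finite_setOf_evalEval_eq_zero_of_fst_mem
      (finite_setOfPred_isRoot (resultant_ne_zero_of_irreducible_of_not_dvd hF hdeg hndvd))
      fun x _ => map_evalRingHom_ne_zero_of_isPrimitive (hF.isPrimitive hdeg) x).subset ?_
    rintro z ⟨hFz, hGz⟩
    refine ⟨?_, hFz⟩
    simpa [evalEval_add, evalEval_mul, hFz, hGz, evalEval_C] using congr(evalEval z.1 z.2 $hpq).symm

theorem infinite_setOf_evalEval_eq_zero [IsAlgClosed K] {F : K[X][Y]} (hF : ¬IsUnit F)
    (hF0 : F ≠ 0) : {z : K × K | F.evalEval z.1 z.2 = 0}.Infinite := by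
  by_cases hdeg : F.natDegree = 0
  · obtain ⟨a, rfl⟩ : ∃ a, F = Polynomial.C a := ⟨_, eq_C_of_natDegree_eq_zero hdeg⟩
    obtain ⟨x, hx⟩ := IsAlgClosed.exists_root a fun h =>
      hF (isUnit_C.mpr (isUnit_iff_degree_eq_zero.mpr h))
    refine Set.infinite_of_injective_forall_mem (Prod.mk_right_injective x) fun y => ?_
    simpa [evalEval_C] using hx
  · have hlc : F.leadingCoeff ≠ 0 := leadingCoeff_ne_zero.mpr hF0
    refine Set.Infinite.of_image Prod.fst ((finite_setOfPred_isRoot hlc).infinite_compl.mono ?_)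
    intro x hx
    have hdeg' : (F.map (evalRingHom x)).degree ≠ 0 := by
      rw [degree_map_eq_of_leadingCoeff_ne_zero (evalRingHom x) hx, degree_eq_natDegree hF0]
      exact_mod_cast hdeg
    obtain ⟨y, hy⟩ := IsAlgClosed.exists_root _ hdeg'
    exact ⟨(x, y), by simpa [map_evalRingHom_eval] using hy, rfl⟩

lemma eval_equivMvPolynomial (v : Fin 2 → K) (F : K[X][Y]) :
    MvPolynomial.eval v (equivMvPolynomial K F) = F.evalEval (v 0) (v 1) := by
  rw [← coe_aevalAeval_eq_evalEval (A := K), ← MvPolynomial.coe_aeval_eq_eval]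
  change ((MvPolynomial.aeval v).comp (equivMvPolynomial K).toAlgHom) F = _
  congr 1
  ext <;> simp

end Bivariate

section PlaneCurve

open Polynomial.Bivariate

variable {K : Type*} [Field K]

lemma eval_eq_evalEval (v : Fin 2 → K) (f : MvPolynomial (Fin 2) K) :
    eval v f = ((equivMvPolynomial K).symm f).evalEval (v 0) (v 1) := by
  rw [← eval_equivMvPolynomial, AlgEquiv.apply_symm_apply]

theorem dvd_of_infinite_setOf_eval_eq_zero {f g : MvPolynomial (Fin 2) K} (hf : Irreducible f)
    (hfg : {v : Fin 2 → K | eval v f = 0 ∧ eval v g = 0}.Infinite) : f ∣ g := by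
  set e := (equivMvPolynomial K).symm
  refine (map_dvd_iff e).mp (dvd_of_infinite_setOf_evalEval_eq_zero (hf.map e) ?_)
  refine (hfg.image (finTwoArrowEquiv K).injective.injOn).mono ?_
  rintro _ ⟨v, hv, rfl⟩
  simpa [eval_eq_evalEval] using hv

lemma eval_eq_zero_of_dvd_of_mem_curveOf {f g : MvPolynomial (Fin 2) K} (hfg : f ∣ g)
    {v : Fin 2 → K} (hv : v ∈ curveOf f) : eval v g = 0 :=
  zero_dvd_iff.mp (hv ▸ map_dvd (eval v) hfg)

theorem curveOf_infinite [IsAlgClosed K] {f : MvPolynomial (Fin 2) K} (hf : Irreducible f) :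
    (curveOf f).Infinite := by
  set e := (equivMvPolynomial K).symm
  refine ((infinite_setOf_evalEval_eq_zero (hf.map e).not_isUnit (hf.map e).ne_zero).image
    (finTwoArrowEquiv K).symm.injective.injOn).mono ?_
  rintro _ ⟨z, hz, rfl⟩
  simpa [curveOf, eval_eq_evalEval] using hz

lemma curveOf_subset_closure {f : MvPolynomial (Fin 2) K} (hf : Irreducible f)
    {Ω : Set (Fin 2 → K)} (hΩ : Ω ⊆ curveOf f) (hinf : Ω.Infinite) : curveOf f ⊆ closure Ω := by
  intro v hv
  rw [closure_eq_zarClosure]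
  exact fun p hp => eval_eq_zero_of_dvd_of_mem_curveOf
    (dvd_of_infinite_setOf_eval_eq_zero hf (hinf.mono fun w hw => ⟨hΩ hw, hp w hw⟩)) hv

end PlaneCurve

section Conchoid

variable {K : Type*} [Field K]

def conchoidPt (A P : Fin 2 → K) (τ : K) : Fin 2 → K := fun i => P i + τ * (P i - A i)

lemma mem_Inc_iff {C : Set (Fin 2 → K)} {A : Fin 2 → K} {d : K}
    {q : (Fin 2 → K) × (Fin 2 → K) × K} :
    q ∈ Inc C A d ↔ q.2.1 ∈ C ∧ nSq A q.2.1 ≠ 0 ∧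
      ∃ τ, τ ^ 2 * nSq A q.2.1 = d ^ 2 ∧ q = (conchoidPt A q.2.1 τ, q.2.1, (nSq A q.2.1)⁻¹) := by
  obtain ⟨Q, P, w⟩ := q
  simp only [Inc, mem_ofPred_eq, Prod.mk.injEq, true_and]
  constructor
  · rintro ⟨hP, hdist, hcross, hw⟩
    have hs : nSq A P ≠ 0 := right_ne_zero_of_mul_eq_one hw
    -- `Q - P` is parallel to `P - A`; `τ` is the ratio, computed by projecting onto `P - A`
    refine ⟨hP, hs, ((P 0 - A 0) * (Q 0 - P 0) + (P 1 - A 1) * (Q 1 - P 1)) / nSq A P, ?_, ?_,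
      eq_inv_of_mul_eq_one_left hw⟩
    · rw [div_pow, div_mul_eq_mul_div, div_eq_iff (pow_ne_zero 2 hs)]
      unfold nSq
      linear_combination ((P 0 - A 0) ^ 2 + (P 1 - A 1) ^ 2) ^ 2 * hdist -
        ((P 0 - A 0) ^ 2 + (P 1 - A 1) ^ 2) *
          ((P 1 - A 1) * (Q 0 - P 0) - (P 0 - A 0) * (Q 1 - P 1)) * hcross
    · refine funext <| Fin.forall_fin_two.mpr ⟨?_, ?_⟩ <;> simp only [conchoidPt] <;> field_simp <;>
        unfold nSq
      · linear_combination (P 1 - A 1) * hcross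
      · linear_combination -(P 0 - A 0) * hcross
  · rintro ⟨hP, hs, τ, hτ, rfl, rfl⟩
    refine ⟨hP, ?_, ?_, inv_mul_cancel₀ hs⟩
    · simp only [conchoidPt]; unfold nSq at hτ; linear_combination hτ
    · simp only [conchoidPt]; ring

lemma conchoidPt_mem_Inc {C : Set (Fin 2 → K)} {A P : Fin 2 → K} {d τ : K} (hP : P ∈ C)
    (hs : nSq A P ≠ 0) (hτ : τ ^ 2 * nSq A P = d ^ 2) :
    (conchoidPt A P τ, P, (nSq A P)⁻¹) ∈ Inc C A d :=
  mem_Inc_iff.mpr ⟨hP, hs, τ, hτ, rfl⟩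

lemma eq_or_eq_neg_of_sq_mul_eq {s d τ τ' : K} (hs : s ≠ 0) (hτ : τ ^ 2 * s = d ^ 2)
    (hτ' : τ' ^ 2 * s = d ^ 2) : τ' = τ ∨ τ' = -τ :=
  sq_eq_sq_iff_eq_or_eq_neg.mp (mul_right_cancel₀ hs (hτ'.trans hτ.symm))

lemma fst_mem_conchoid {C : Set (Fin 2 → K)} {A : Fin 2 → K} {d : K}
    {q : (Fin 2 → K) × (Fin 2 → K) × K} (hq : q ∈ Inc C A d) : q.1 ∈ conchoid C A d :=
  fun _ hp => hp _ ⟨q, hq, rfl⟩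

noncomputable def nSqPoly (A : Fin 2 → K) : MvPolynomial (Fin 2) K :=
  (X 0 - C (A 0)) ^ 2 + (X 1 - C (A 1)) ^ 2

@[simp]
lemma eval_nSqPoly (A P : Fin 2 → K) : eval P (nSqPoly A) = nSq A P := by
  simp [nSqPoly, nSq]

noncomputable def alongRay (A : Fin 2 → K) (g : MvPolynomial (Fin 2) K) :
    Polynomial (MvPolynomial (Fin 2) K) :=
  aeval (fun i => Polynomial.C (X i) + Polynomial.X * Polynomial.C (X i - C (A i))) g

lemma eval_alongRay (A P : Fin 2 → K) (τ : K) (g : MvPolynomial (Fin 2) K) :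
    ((alongRay A g).map (eval P)).eval τ = eval (conchoidPt A P τ) g := by
  induction g using MvPolynomial.induction_on with
  | C a => simp [alongRay, Polynomial.algebraMap_apply, MvPolynomial.algebraMap_eq]
  | add p q hp hq => simp_all [alongRay]
  | mul_X p i hp => simp_all [alongRay, conchoidPt]

/-- Only the even powers `τ ^ (2 * m) = (d ^ 2 / nSq A P) ^ m` survive in `W(τ) + W(-τ)`;
multiplying by `nSq A P ^ W.natDegree` clears the denominators. -/
noncomputable def branchSum (A : Fin 2 → K) (d : K) (W : Polynomial (MvPolynomial (Fin 2) K)) :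
    MvPolynomial (Fin 2) K :=
  ∑ j ∈ Finset.range (W.natDegree + 1),
    C ((1 + (-1) ^ j) * d ^ j) * W.coeff j * nSqPoly A ^ (W.natDegree - j / 2)

lemma pow_mul_pow_add_neg_pow_of_sq_mul_eq {s d τ : K} (hτ : τ ^ 2 * s = d ^ 2) {j N : ℕ}
    (hj : j ≤ N) :
    s ^ N * (τ ^ j + (-τ) ^ j) = (1 + (-1) ^ j) * d ^ j * s ^ (N - j / 2) := by
  obtain ⟨m, rfl | rfl⟩ := Nat.even_or_odd' j
  · have hN : s ^ N = s ^ m * s ^ (N - m) := by rw [← pow_add]; congr 1; omega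
    rw [show 2 * m / 2 = m by omega, hN, pow_mul d, ← hτ]
    ring
  · simp [pow_succ, pow_mul]

lemma eval_branchSum {A P : Fin 2 → K} {d τ : K} (hτ : τ ^ 2 * nSq A P = d ^ 2)
    (W : Polynomial (MvPolynomial (Fin 2) K)) :
    eval P (branchSum A d W) = nSq A P ^ W.natDegree *
      ((W.map (eval P)).eval τ + (W.map (eval P)).eval (-τ)) := by
  have hdeg : (W.map (eval P)).natDegree < W.natDegree + 1 :=
    Nat.lt_succ_of_le Polynomial.natDegree_map_le
  rw [Polynomial.eval_eq_sum_range' hdeg, Polynomial.eval_eq_sum_range' hdeg,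
    ← Finset.sum_add_distrib, Finset.mul_sum, branchSum, map_sum]
  refine Finset.sum_congr rfl fun j hj => ?_
  have := pow_mul_pow_add_neg_pow_of_sq_mul_eq hτ (Nat.lt_succ_iff.mp (Finset.mem_range.mp hj))
  simp only [map_mul, map_pow, eval_C, eval_nSqPoly, Polynomial.coeff_map]
  linear_combination -(eval P (W.coeff j)) * this

lemma branchSum_eq_zero_and_iff [NeZero (2 : K)] {A P : Fin 2 → K} {d τ : K}
    (hs : nSq A P ≠ 0) (hτ : τ ^ 2 * nSq A P = d ^ 2) (g : MvPolynomial (Fin 2) K) :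
    (eval P (branchSum A d (alongRay A g)) = 0 ∧
      eval P (branchSum A d (alongRay A g * (alongRay A g).comp (-Polynomial.X))) = 0) ↔
    (eval (conchoidPt A P τ) g = 0 ∧ eval (conchoidPt A P (-τ)) g = 0) := by
  simp only [eval_branchSum hτ, Polynomial.map_mul, Polynomial.map_comp, Polynomial.map_neg,
    Polynomial.map_X, Polynomial.eval_mul, Polynomial.eval_comp, Polynomial.eval_neg,
    Polynomial.eval_X, neg_neg, eval_alongRay, mul_eq_zero, pow_eq_zero_iff', hs, false_and,
    false_or]
  set x := eval (conchoidPt A P τ) g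
  set y := eval (conchoidPt A P (-τ)) g
  refine ⟨fun ⟨hsum, hprod⟩ => ?_, fun ⟨hx, hy⟩ => by simp [hx, hy]⟩
  have hxy : x * y = 0 :=
    (mul_eq_zero.mp (by linear_combination hprod : (2 : K) * (x * y) = 0)).resolve_left two_ne_zero
  rcases mul_eq_zero.mp hxy with hx | hy
  · exact ⟨hx, by linear_combination hsum - hx⟩
  · exact ⟨by linear_combination hsum - hy, hy⟩

lemma infinite_nonIso [IsAlgClosed K] {f : MvPolynomial (Fin 2) K} (hf : Irreducible f)
    {A : Fin 2 → K} (h0 : (nonIso (curveOf f) A).Nonempty) : (nonIso (curveOf f) A).Infinite := by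
  obtain ⟨P₀, hP₀C, hP₀⟩ := h0
  have hiso : {P | eval P f = 0 ∧ eval P (nSqPoly A) = 0}.Finite := by
    refine Set.not_infinite.mp fun hinf => hP₀ ?_
    simpa using
      eval_eq_zero_of_dvd_of_mem_curveOf (dvd_of_infinite_setOf_eval_eq_zero hf hinf) hP₀C
  refine ((curveOf_infinite hf).sdiff hiso).mono ?_
  rintro P ⟨hPC, hP⟩
  exact ⟨hPC, fun h => hP ⟨hPC, by simpa using h⟩⟩

def bothBranchesIn (C : Set (Fin 2 → K)) (A : Fin 2 → K) (d : K) (Z : Set (Fin 2 → K)) :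
    Set (Fin 2 → K) :=
  {P ∈ nonIso C A | ∀ τ : K, τ ^ 2 * nSq A P = d ^ 2 → conchoidPt A P τ ∈ Z}

theorem bothBranchesIn_finite [IsAlgClosed K] [NeZero (2 : K)] {f : MvPolynomial (Fin 2) K}
    (hf : Irreducible f) {A : Fin 2 → K} {d : K} {Z : Set (Fin 2 → K)} (hZ : IsClosed Z)
    (hconZ : ¬conchoid (curveOf f) A d ⊆ Z) : (bothBranchesIn (curveOf f) A d Z).Finite := by
  obtain ⟨z, hz, hzZ⟩ := not_subset.mp hconZ
  obtain ⟨g, hgZ, hgz⟩ := exists_eval_ne_zero_of_notMem hZ hzZ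
  refine Set.not_infinite.mp fun hinf => ?_
  have hdvd : ∀ H, (∀ P ∈ bothBranchesIn (curveOf f) A d Z, eval P H = 0) → f ∣ H :=
    fun H hH => dvd_of_infinite_setOf_eval_eq_zero hf (hinf.mono fun P hP => ⟨hP.1.1, hH P hP⟩)
  have hbranches : ∀ P ∈ bothBranchesIn (curveOf f) A d Z,
      eval P (branchSum A d (alongRay A g)) = 0 ∧
      eval P (branchSum A d (alongRay A g * (alongRay A g).comp (-Polynomial.X))) = 0 := by
    rintro P ⟨⟨-, hs⟩, hPZ⟩
    obtain ⟨τ, hτ⟩ := IsAlgClosed.exists_pow_nat_eq (d ^ 2 / nSq A P) two_pos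
    replace hτ : τ ^ 2 * nSq A P = d ^ 2 := by rw [hτ, div_mul_cancel₀ _ hs]
    exact (branchSum_eq_zero_and_iff hs hτ g).mpr
      ⟨hgZ _ (hPZ τ hτ), hgZ _ (hPZ (-τ) (by rwa [neg_sq]))⟩
  have hsum := hdvd _ fun P hP => (hbranches P hP).1
  have hprod := hdvd _ fun P hP => (hbranches P hP).2
  -- every point of `π₁(B)` is a conchoid point of some `P ∈ C₀`, so `g` vanishes on the conchoid
  refine hgz (hz g ?_)
  rintro _ ⟨q, hq, rfl⟩
  obtain ⟨hPC, hs, τ, hτ, hq⟩ := mem_Inc_iff.mp hq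
  show eval q.1 g = 0
  rw [congrArg Prod.fst hq]
  exact ((branchSum_eq_zero_and_iff hs hτ g).mp ⟨eval_eq_zero_of_dvd_of_mem_curveOf hsum hPC,
    eval_eq_zero_of_dvd_of_mem_curveOf hprod hPC⟩).1

lemma exists_lifts_eq_singleton {C : Set (Fin 2 → K)} {A : Fin 2 → K} {d : K}
    {M M' : Set (Fin 2 → K)} (hcover : ∀ q ∈ Inc C A d, q.1 ∈ M ∪ M') {P : Fin 2 → K}
    (hP : P ∈ nonIso C A \ (bothBranchesIn C A d M ∪ bothBranchesIn C A d M')) :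
    ∃ q, {q ∈ Inc C A d | q.1 ∈ M ∧ q.2.1 = P} = {q} := by
  obtain ⟨⟨hPC, hs⟩, hPM⟩ := hP
  obtain ⟨τ, hτ, hτM⟩ : ∃ τ : K, τ ^ 2 * nSq A P = d ^ 2 ∧ conchoidPt A P τ ∉ M := by
    simpa [bothBranchesIn, hPC, hs, nonIso] using fun h => hPM (Or.inl h)
  have hτ' : (-τ) ^ 2 * nSq A P = d ^ 2 := by rwa [neg_sq]
  have hmem := conchoidPt_mem_Inc hPC hs hτ
  have hmem' := conchoidPt_mem_Inc hPC hs hτ'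
  have hτM' : conchoidPt A P τ ∈ M' := (hcover _ hmem).resolve_left hτM
  have hnegM : conchoidPt A P (-τ) ∈ M := by
    refine (hcover _ hmem').resolve_right fun hnegM' =>
      hPM (Or.inr ⟨⟨hPC, hs⟩, fun τ' hτ'' => ?_⟩)
    rcases eq_or_eq_neg_of_sq_mul_eq hs hτ hτ'' with rfl | rfl
    exacts [hτM', hnegM']
  refine ⟨_, Set.eq_singleton_iff_unique_mem.mpr ⟨⟨hmem', hnegM, rfl⟩, ?_⟩⟩
  rintro q ⟨hq, hqM, rfl⟩
  obtain ⟨-, -, τ', hτ'', hq⟩ := mem_Inc_iff.mp hq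
  rcases eq_or_eq_neg_of_sq_mul_eq hs hτ hτ'' with rfl | rfl
  · exact absurd (hq ▸ hqM) hτM
  · exact hq

end Conchoid

theorem stmt19_general {K : Type*} [Field K] [IsAlgClosed K] [CharZero K]
    (f : MvPolynomial (Fin 2) K) (hf : Irreducible f)
    (A : Fin 2 → K) (d : K)
    (h0 : (nonIso (curveOf f) A).Nonempty)
    (M M' : Set (Fin 2 → K))
    (hM : IsCompOf M (conchoid (curveOf f) A d))
    (hM' : IsCompOf M' (conchoid (curveOf f) A d))
    (hne : M ≠ M')
    (hsplit : conchoid (curveOf f) A d = M ∪ M') :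
    curveOf f ⊆ closure ((fun q => q.2.1) '' {q ∈ Inc (curveOf f) A d | q.1 ∈ M}) ∧
    ∃ Ω : Set (Fin 2 → K), Ω.Nonempty ∧ Ω ⊆ curveOf f ∧ curveOf f ⊆ closure Ω ∧
      ∀ P ∈ Ω, ({q ∈ Inc (curveOf f) A d | q.1 ∈ M ∧ q.2.1 = P}).ncard = 1 := by
  have hcover : ∀ q ∈ Inc (curveOf f) A d, q.1 ∈ M ∪ M' := fun q hq => hsplit ▸ fst_mem_conchoid hq
  set Ω := nonIso (curveOf f) A \
    (bothBranchesIn (curveOf f) A d M ∪ bothBranchesIn (curveOf f) A d M')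
  have hΩ : Ω.Infinite := (infinite_nonIso hf h0).sdiff <|
    (bothBranchesIn_finite hf hM.2.1 (hM'.not_subset hM hne.symm)).union
      (bothBranchesIn_finite hf hM'.2.1 (hM.not_subset hM' hne))
  have hdense : curveOf f ⊆ closure Ω := curveOf_subset_closure hf (fun P hP => hP.1.1) hΩ
  have hlift : ∀ P ∈ Ω, ∃ q, {q ∈ Inc (curveOf f) A d | q.1 ∈ M ∧ q.2.1 = P} = {q} :=
    fun P hP => exists_lifts_eq_singleton hcover hP
  refine ⟨hdense.trans (closure_mono fun P hP => ?_), Ω, hΩ.nonempty, fun P hP => hP.1.1, hdense,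
    fun P hP => ncard_eq_one.mpr (hlift P hP)⟩
  obtain ⟨q, hq⟩ := hlift P hP
  obtain ⟨hqInc, hqM, hqP⟩ : q ∈ {q ∈ Inc (curveOf f) A d | q.1 ∈ M ∧ q.2.1 = P} := hq ▸ rfl
  exact ⟨q, ⟨hqInc, hqM⟩, hqP⟩

theorem stmt19 {K : Type*} [Field K] [IsAlgClosed K] [CharZero K]
    (f : MvPolynomial (Fin 2) K) (hf : Irreducible f)
    (A : Fin 2 → K) (d : K) (hd : d ≠ 0)
    (h0 : (nonIso (curveOf f) A).Nonempty)
    (hC : curveOf f ≠ circleAt A d)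
    (M M' : Set (Fin 2 → K))
    (hM : IsCompOf M (conchoid (curveOf f) A d))
    (hM' : IsCompOf M' (conchoid (curveOf f) A d))
    (hne : M ≠ M')
    (hsplit : conchoid (curveOf f) A d = M ∪ M') :
    curveOf f ⊆ closure ((fun q => q.2.1) '' {q ∈ Inc (curveOf f) A d | q.1 ∈ M}) ∧
    ∃ Ω : Set (Fin 2 → K), Ω.Nonempty ∧ Ω ⊆ curveOf f ∧ curveOf f ⊆ closure Ω ∧
      ∀ P ∈ Ω, ({q ∈ Inc (curveOf f) A d | q.1 ∈ M ∧ q.2.1 = P}).ncard = 1 :=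
  stmt19_general f hf A d h0 M M' hM hM' hne hsplit
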